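/- Every connected self-centered graph on at least 3 vertices is 2-connected. -/

import Mathlib

open Finset

/-- The Wiener index: sum of distances over unordered pairs of vertices. -/
noncomputable def wiener {V : Type*} [Fintype V] (G : SimpleGraph V) : ℕ :=
  (∑ u : V, ∑ v : V, G.dist u v) / 2

/-- The eccentricity of a vertex. -/
noncomputable def eccVert {V : Type*} [Fintype V] (G : SimpleGraph V) (v : V) : ℕ :=
  univ.sup (G.dist v)

/-- The eccentricity (total eccentricity) of a graph. -/
noncomputable def eccSum {V : Type*} [Fintype V] (G : SimpleGraph V) : ℕ :=
  ∑ v : V, eccVert G v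

/-!
Let `v` be a vertex of maximal eccentricity and `w` a vertex farthest from `v`. If some `u ≠ v`
were separated from `w` by deleting `v`, a shortest `u`–`w` path would run through `v`, so
`d(u, w) = d(u, v) + d(v, w) > d(v, w) = ecc v ≥ ecc u ≥ d(u, w)`. In a self-centered graph
every vertex has maximal eccentricity.
-/

namespace SimpleGraph

variable {V : Type*} {G : SimpleGraph V}

lemma Walk.toSubgraph_le_deleteVerts {x y : V} {s : Set V} (p : G.Walk x y)
    (hp : ∀ z ∈ p.support, z ∉ s) : p.toSubgraph ≤ (⊤ : G.Subgraph).deleteVerts s := by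
  refine ⟨fun z hz ↦ ?_, fun a b hab ↦ ?_⟩
  · rw [p.verts_toSubgraph] at hz
    exact ⟨trivial, hp z hz⟩
  · exact Subgraph.deleteVerts_adj.mpr ⟨trivial, hp a (p.mem_support_of_adj_toSubgraph hab),
      trivial, hp b (p.mem_support_of_adj_toSubgraph hab.symm), hab.adj_sub⟩

lemma Walk.reachable_deleteVerts {x y : V} {s : Set V} (p : G.Walk x y)
    (hp : ∀ z ∈ p.support, z ∉ s) (hx : x ∈ ((⊤ : G.Subgraph).deleteVerts s).verts)
    (hy : y ∈ ((⊤ : G.Subgraph).deleteVerts s).verts) :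
    ((⊤ : G.Subgraph).deleteVerts s).coe.Reachable ⟨x, hx⟩ ⟨y, hy⟩ :=
  (p.toSubgraph_connected ⟨x, p.start_mem_verts_toSubgraph⟩
    ⟨y, p.end_mem_verts_toSubgraph⟩).map (Subgraph.inclusion (p.toSubgraph_le_deleteVerts hp))

lemma Walk.dist_add_dist_le_length {x y z : V} (p : G.Walk x z) (hy : y ∈ p.support) :
    G.dist x y + G.dist y z ≤ p.length := by
  classical
  rw [← p.take_spec hy, length_append]
  exact add_le_add (dist_le _) (dist_le _)

lemma Connected.dist_add_dist_le_of_not_reachable_deleteVerts (hG : G.Connected) {v : V}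
    {x y : ((⊤ : G.Subgraph).deleteVerts {v}).verts}
    (hxy : ¬((⊤ : G.Subgraph).deleteVerts {v}).coe.Reachable x y) :
    G.dist x v + G.dist v y ≤ G.dist (x : V) y := by
  obtain ⟨p, hp⟩ := hG.exists_walk_length_eq_dist x y
  have hv : v ∈ p.support := by
    by_contra hv
    exact hxy (p.reachable_deleteVerts (fun z hz hzv ↦ hv ((hzv : z = v) ▸ hz)) x.2 y.2)
  exact hp ▸ p.dist_add_dist_le_length hv

variable [Fintype V]

variable (G) in
lemma dist_le_eccVert (u w : V) : G.dist u w ≤ eccVert G u :=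
  le_sup (mem_univ w)

variable (G) in
lemma exists_dist_eq_eccVert [Nonempty V] (u : V) : ∃ w, G.dist u w = eccVert G u := by
  obtain ⟨w, -, hw⟩ := exists_mem_eq_sup univ univ_nonempty (G.dist u)
  exact ⟨w, hw.symm⟩

theorem Connected.preconnected_deleteVerts_of_forall_eccVert_le (hG : G.Connected) {v : V}
    (hv : ∀ u, eccVert G u ≤ eccVert G v) :
    ((⊤ : G.Subgraph).deleteVerts {v}).coe.Preconnected := by
  have := hG.nonempty
  obtain ⟨w, hw⟩ := G.exists_dist_eq_eccVert v
  intro x y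
  have hwv : w ≠ v := by
    have : G.dist v w ≠ 0 :=
      hw ▸ ((hG.pos_dist_of_ne (Ne.symm x.2.2)).trans_le (G.dist_le_eccVert v x)).ne'
    exact (dist_ne_zero_iff_ne_and_reachable.mp this).1.symm
  have reachable_far :
      ∀ z, ((⊤ : G.Subgraph).deleteVerts {v}).coe.Reachable z ⟨w, trivial, hwv⟩ := by
    intro z
    by_contra hz
    have hzv : 0 < G.dist z v := hG.pos_dist_of_ne z.2.2
    refine lt_irrefl (eccVert G v) ?_
    calc eccVert G v
        = G.dist v w := hw.symm
      _ < G.dist z v + G.dist v w := by omega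
      _ ≤ G.dist z w := hG.dist_add_dist_le_of_not_reachable_deleteVerts hz
      _ ≤ eccVert G z := G.dist_le_eccVert z w
      _ ≤ eccVert G v := hv z
  exact (reachable_far x).trans (reachable_far y).symm

end SimpleGraph

theorem stmt_7 {V : Type*} [Fintype V] (G : SimpleGraph V) (hG : G.Connected)
    (hn : 3 ≤ Fintype.card V)
    (hsc : ∀ u v : V, eccVert G u = eccVert G v) :
    ∀ v : V, ((⊤ : G.Subgraph).deleteVerts {v}).coe.Connected := by
  intro v
  obtain ⟨u, hu⟩ := Fintype.exists_ne_of_one_lt_card (by omega) v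
  rw [SimpleGraph.connected_iff]
  exact ⟨hG.preconnected_deleteVerts_of_forall_eccVert_le fun u ↦ (hsc u v).le,
    ⟨u, trivial, hu⟩⟩
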